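/- arXiv:0803.0391 — 3 statements merged into one kernel-verified Lean document; each statement's English description precedes it below -/
import Mathlib

section
/- Consider the system x' = (H₂(ρ) x + y)/ρ, y' = x/ρ on ρ ∈ [ρ₁, ∞), with H₂ continuous and bounded. Any solution entering the open first quadrant satisfies x(ρ) → ∞ as ρ → ∞. Consequently, a solution that remains bounded for all ρ ≥ ρ₁ and that starts in the closed first quadrant must be identically zero. -/
/-!
The open first quadrant is invariant: there `y` increases and `ρ ^ M * x` increases, so `x`
cannot reach `0` first. Inside it, `z = α x + y` with `α = 1 / (M + 1)` satisfies the Euler-type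
inequality `ρ z' ≥ α z`, hence `z ≥ B ρ ^ α`; feeding this into `ρ x' + K x ≥ z` with `K = M + α`
gives `x ≥ b ρ ^ α - O(ρ ^ (-K))`. A bounded solution starting in the closed quadrant must
therefore start at the origin (otherwise it enters the open quadrant at once), and Grönwall's
inequality, the coefficients being `O(1 / ρ₁)`, makes it vanish.
-/

open Filter Set Topology

theorem monotoneOn_of_hasDerivAt_nonneg {f f' : ℝ → ℝ} {s : Set ℝ} (hs : Convex ℝ s)
    (hf : ∀ t ∈ s, HasDerivAt f (f' t) t) (hf' : ∀ t ∈ s, 0 ≤ f' t) : MonotoneOn f s :=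
  monotoneOn_of_hasDerivWithinAt_nonneg hs
    (fun t ht => (hf t ht).continuousAt.continuousWithinAt)
    (fun t ht => (hf t (interior_subset ht)).hasDerivWithinAt)
    (fun t ht => hf' t (interior_subset ht))

theorem monotoneOn_rpow_neg_mul_of_mul_le_mul_deriv {f f' : ℝ → ℝ} {c : ℝ} {s : Set ℝ}
    (hs : Convex ℝ s) (hs₀ : s ⊆ Ioi 0) (hf : ∀ t ∈ s, HasDerivAt f (f' t) t)
    (h : ∀ t ∈ s, c * f t ≤ t * f' t) : MonotoneOn (fun t => t ^ (-c) * f t) s := by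
  refine monotoneOn_of_hasDerivAt_nonneg hs
    (fun t ht => ((Real.hasDerivAt_rpow_const (Or.inl (hs₀ ht).ne')).mul (hf t ht))) ?_
  intro t ht
  have ht₀ : 0 < t := hs₀ ht
  have hpow : t ^ (-c) = t ^ (-c - 1) * t := by
    rw [← Real.rpow_add_one ht₀.ne']; ring_nf
  have hderiv : -c * t ^ (-c - 1) * f t + t ^ (-c) * f' t
      = t ^ (-c - 1) * (t * f' t - c * f t) := by
    rw [hpow]; ring
  rw [hderiv]
  exact mul_nonneg (Real.rpow_nonneg ht₀.le _) (sub_nonneg.2 (h t ht))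

theorem mul_rpow_le_of_mul_le_mul_deriv {f f' : ℝ → ℝ} {c a : ℝ} (ha : 0 < a)
    (hf : ∀ t ∈ Ici a, HasDerivAt f (f' t) t) (h : ∀ t ∈ Ici a, c * f t ≤ t * f' t) :
    ∀ t ∈ Ici a, a ^ (-c) * f a * t ^ c ≤ f t := by
  intro t ht
  have ht₀ : 0 < t := ha.trans_le ht
  have hmono := monotoneOn_rpow_neg_mul_of_mul_le_mul_deriv (convex_Ici a)
    (fun s hs => ha.trans_le hs) hf h self_mem_Ici ht ht
  calc a ^ (-c) * f a * t ^ c ≤ t ^ (-c) * f t * t ^ c := by gcongr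
    _ = f t := by
      rw [mul_comm, ← mul_assoc, ← Real.rpow_add ht₀, add_neg_cancel, Real.rpow_zero, one_mul]

theorem ContinuousOn.exists_first_zero_Ici {f : ℝ → ℝ} {a : ℝ} (hf : ContinuousOn f (Ici a))
    (ha : 0 < f a) (h : ∃ t ∈ Ici a, f t ≤ 0) : ∃ τ ∈ Ioi a, f τ = 0 ∧ ∀ t ∈ Ico a τ, 0 < f t := by
  set S := Ici a ∩ f ⁻¹' Iic 0
  have hS : IsClosed S := hf.preimage_isClosed_of_isClosed isClosed_Ici isClosed_Iic
  have hbdd : BddBelow S := ⟨a, fun t ht => ht.1⟩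
  obtain ⟨haτ, hfτ⟩ : sInf S ∈ S := hS.csInf_mem h hbdd
  have hbefore : ∀ t ∈ Ico a (sInf S), 0 < f t := fun t ht =>
    not_le.1 fun hft => (csInf_le hbdd ⟨ht.1, hft⟩).not_gt ht.2
  have hlt : a < sInf S := lt_of_le_of_ne haτ fun he => (he ▸ hfτ).not_gt ha
  obtain ⟨σ, hσ, hfσ⟩ := intermediate_value_Icc' haτ (hf.mono Icc_subset_Ici_self)
    ⟨hfτ, ha.le⟩
  have hστ : σ = sInf S := le_antisymm hσ.2 (csInf_le hbdd ⟨hσ.1, hfσ.le⟩)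
  exact ⟨sInf S, hlt, hστ ▸ hfσ, hbefore⟩

theorem HasDerivAt.eventually_pos_nhdsGT {f : ℝ → ℝ} {a d : ℝ} (hf : HasDerivAt f d a)
    (h₀ : 0 ≤ f a) (h : 0 < f a ∨ 0 < d) : ∀ᶠ t in 𝓝[>] a, 0 < f t := by
  rcases h with hfa | hd
  · exact (hf.continuousAt.eventually (eventually_gt_nhds hfa)).filter_mono nhdsWithin_le_nhds
  · have hslope : ∀ᶠ t in 𝓝[>] a, 0 < slope f a t :=
      ((hasDerivAt_iff_tendsto_slope.1 hf).eventually (eventually_gt_nhds hd)).filter_mono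
        (nhdsGT_le_nhdsNE a)
    filter_upwards [hslope, self_mem_nhdsWithin] with t hst hat
    exact h₀.trans_lt ((slope_pos_iff_of_le (le_of_lt hat)).1 hst)

namespace LinearEulerSystem

variable {H₂ : ℝ → ℝ} {M ρ₁ : ℝ} {x y : ℝ → ℝ}

theorem pos_and_pos_of_pos_of_pos (hM : ∀ ρ ∈ Ici ρ₁, -M ≤ H₂ ρ) (hρ₁ : 0 < ρ₁)
    (hx : ∀ ρ ∈ Ici ρ₁, HasDerivAt x ((H₂ ρ * x ρ + y ρ) / ρ) ρ)
    (hy : ∀ ρ ∈ Ici ρ₁, HasDerivAt y (x ρ / ρ) ρ) (hx₁ : 0 < x ρ₁) (hy₁ : 0 < y ρ₁) :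
    ∀ ρ ∈ Ici ρ₁, 0 < x ρ ∧ 0 < y ρ := by
  have hy_mono : ∀ s ⊆ Ici ρ₁, Convex ℝ s → (∀ ρ ∈ s, 0 ≤ x ρ) → MonotoneOn y s :=
    fun s hs hconv hxs => monotoneOn_of_hasDerivAt_nonneg hconv (fun ρ hρ => hy ρ (hs hρ))
      fun ρ hρ => div_nonneg (hxs ρ hρ) (hρ₁.trans_le (hs hρ)).le
  have hx_pos : ∀ ρ ∈ Ici ρ₁, 0 < x ρ := by
    by_contra! hneg
    have hcont : ContinuousOn x (Ici ρ₁) := fun ρ hρ => (hx ρ hρ).continuousAt.continuousWithinAt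
    obtain ⟨τ, hτ, hxτ, hbefore⟩ := hcont.exists_first_zero_Ici hx₁ hneg
    have hsub : Icc ρ₁ τ ⊆ Ici ρ₁ := Icc_subset_Ici_self
    have hx_nonneg : ∀ ρ ∈ Icc ρ₁ τ, 0 ≤ x ρ := fun ρ hρ =>
      hρ.2.eq_or_lt.elim (fun h => (h ▸ hxτ).ge) fun h => (hbefore ρ ⟨hρ.1, h⟩).le
    have hy_mono' := hy_mono _ hsub (convex_Icc ρ₁ τ) hx_nonneg
    have hmono := monotoneOn_rpow_neg_mul_of_mul_le_mul_deriv (c := -M) (convex_Icc ρ₁ τ)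
      (fun ρ hρ => hρ₁.trans_le hρ.1) (fun ρ hρ => hx ρ (hsub hρ)) fun ρ hρ => by
        have hyρ := hy_mono' (left_mem_Icc.2 hτ.le) hρ hρ.1
        rw [mul_div_cancel₀ _ (hρ₁.trans_le hρ.1).ne']
        nlinarith [hM ρ (hsub hρ), hx_nonneg ρ hρ]
    have := hmono (left_mem_Icc.2 hτ.le) (right_mem_Icc.2 hτ.le) hτ.le
    simp only [hxτ, mul_zero] at this
    exact this.not_gt (mul_pos (Real.rpow_pos_of_pos hρ₁ _) hx₁)
  refine fun ρ hρ => ⟨hx_pos ρ hρ, hy₁.trans_le ?_⟩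
  exact hy_mono _ subset_rfl (convex_Ici ρ₁) (fun ρ hρ => (hx_pos ρ hρ).le) self_mem_Ici hρ hρ

theorem exists_mul_rpow_le_of_pos_of_pos (hM₀ : 0 ≤ M) (hM : ∀ ρ ∈ Ici ρ₁, -M ≤ H₂ ρ)
    (hρ₁ : 0 < ρ₁) (hx : ∀ ρ ∈ Ici ρ₁, HasDerivAt x ((H₂ ρ * x ρ + y ρ) / ρ) ρ)
    (hy : ∀ ρ ∈ Ici ρ₁, HasDerivAt y (x ρ / ρ) ρ) (hx₁ : 0 < x ρ₁) (hy₁ : 0 < y ρ₁) :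
    ∃ B > 0, ∀ ρ ∈ Ici ρ₁, B * ρ ^ (M + 1)⁻¹ ≤ (M + 1)⁻¹ * x ρ + y ρ := by
  have hpos := pos_and_pos_of_pos_of_pos hM hρ₁ hx hy hx₁ hy₁
  set α := (M + 1)⁻¹
  have hα : 0 < α := by positivity
  have hα₁ : α ≤ 1 := inv_le_one_of_one_le₀ (by linarith)
  have hαM : α * (M + 1) = 1 := inv_mul_cancel₀ (by positivity)
  refine ⟨ρ₁ ^ (-α) * (α * x ρ₁ + y ρ₁), by positivity, ?_⟩
  refine mul_rpow_le_of_mul_le_mul_deriv (f := fun ρ => α * x ρ + y ρ) hρ₁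
    (fun ρ hρ => ((hx ρ hρ).const_mul α).add (hy ρ hρ)) fun ρ hρ => ?_
  have hρ₀ : ρ ≠ 0 := (hρ₁.trans_le hρ).ne'
  rw [show ρ * (α * ((H₂ ρ * x ρ + y ρ) / ρ) + x ρ / ρ)
      = α * (H₂ ρ * x ρ + y ρ) + x ρ by field_simp]
  have hcoef : α * α ≤ 1 + α * H₂ ρ := by
    nlinarith [mul_le_mul_of_nonneg_left (hM ρ hρ) hα.le, mul_le_mul_of_nonneg_left hα₁ hα.le]
  nlinarith [mul_nonneg (sub_nonneg.2 hcoef) (hpos ρ hρ).1.le]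

theorem tendsto_atTop_of_pos_of_pos (hM₀ : 0 ≤ M) (hM : ∀ ρ ∈ Ici ρ₁, -M ≤ H₂ ρ)
    (hρ₁ : 0 < ρ₁) (hx : ∀ ρ ∈ Ici ρ₁, HasDerivAt x ((H₂ ρ * x ρ + y ρ) / ρ) ρ)
    (hy : ∀ ρ ∈ Ici ρ₁, HasDerivAt y (x ρ / ρ) ρ) (hx₁ : 0 < x ρ₁) (hy₁ : 0 < y ρ₁) :
    Tendsto x atTop atTop := by
  have hpos := pos_and_pos_of_pos_of_pos hM hρ₁ hx hy hx₁ hy₁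
  obtain ⟨B, hB, hz⟩ := exists_mul_rpow_le_of_pos_of_pos hM₀ hM hρ₁ hx hy hx₁ hy₁
  set α := (M + 1)⁻¹
  have hα : 0 < α := by positivity
  set K := M + α
  set b := B / (K + α)
  have hxb := mul_rpow_le_of_mul_le_mul_deriv (f := fun ρ => x ρ - b * ρ ^ α) (c := -K) hρ₁
    (fun ρ hρ => (hx ρ hρ).sub
      ((Real.hasDerivAt_rpow_const (Or.inl (hρ₁.trans_le hρ).ne')).const_mul b))
    fun ρ hρ => by
      have hρ₀ : ρ ≠ 0 := (hρ₁.trans_le hρ).ne'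
      have hpow : ρ * ρ ^ (α - 1) = ρ ^ α := by
        rw [mul_comm, ← Real.rpow_add_one hρ₀]; ring_nf
      rw [show ρ * ((H₂ ρ * x ρ + y ρ) / ρ - b * (α * ρ ^ (α - 1)))
          = H₂ ρ * x ρ + y ρ - b * α * ρ ^ α by
        rw [mul_sub, mul_div_cancel₀ _ hρ₀, ← hpow]; ring]
      have hzρ := hz ρ hρ
      rw [← div_mul_cancel₀ B (by positivity : K + α ≠ 0)] at hzρ
      nlinarith [mul_nonneg (neg_le_iff_add_nonneg.1 (hM ρ hρ)) (hpos ρ hρ).1.le]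
  set D := ρ₁ ^ (-(-K)) * (x ρ₁ - b * ρ₁ ^ α)
  have hlower : Tendsto (fun ρ => b * ρ ^ α + D * ρ ^ (-K)) atTop atTop :=
    ((tendsto_rpow_atTop hα).const_mul_atTop (by positivity)).atTop_add
      (by simpa using (tendsto_rpow_neg_atTop (by positivity : 0 < K)).const_mul D)
  refine tendsto_atTop_mono' atTop ?_ hlower
  filter_upwards [eventually_ge_atTop ρ₁] with ρ hρ
  linarith [hxb ρ hρ]

theorem eq_zero_of_eq_zero (hM : ∀ ρ ∈ Ici ρ₁, |H₂ ρ| ≤ M)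
    (hρ₁ : 0 < ρ₁) (hx : ∀ ρ ∈ Ici ρ₁, HasDerivAt x ((H₂ ρ * x ρ + y ρ) / ρ) ρ)
    (hy : ∀ ρ ∈ Ici ρ₁, HasDerivAt y (x ρ / ρ) ρ) (hx₁ : x ρ₁ = 0) (hy₁ : y ρ₁ = 0) :
    ∀ ρ ∈ Ici ρ₁, x ρ = 0 ∧ y ρ = 0 := by
  intro ρ hρ
  have hderiv : ∀ t ∈ Ici ρ₁,
      HasDerivAt (fun t => (x t, y t)) ((H₂ t * x t + y t) / t, x t / t) t :=
    fun t ht => (hx t ht).prodMk (hy t ht)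
  have hbound : ∀ t ∈ Ico ρ₁ ρ, ‖((H₂ t * x t + y t) / t, x t / t)‖
      ≤ (M + 1) / ρ₁ * ‖(x t, y t)‖ := by
    intro t ht
    have ht₀ : 0 < t := hρ₁.trans_le ht.1
    have hM₀ : 0 ≤ M := (abs_nonneg _).trans (hM t ht.1)
    set m := max |x t| |y t|
    have hm : |x t| ≤ m := le_max_left _ _
    have hnum : max |H₂ t * x t + y t| |x t| ≤ (M + 1) * m := by
      refine max_le ?_ (by nlinarith [mul_nonneg hM₀ ((abs_nonneg _).trans hm)])
      calc |H₂ t * x t + y t| ≤ M * |x t| + |y t| :=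
            (abs_add_le _ _).trans (by rw [abs_mul]; gcongr; exact hM t ht.1)
        _ ≤ (M + 1) * m := by
            nlinarith [le_max_left |x t| |y t|, le_max_right |x t| |y t|]
    simp only [Prod.norm_mk, Real.norm_eq_abs, abs_div, abs_of_pos ht₀]
    rw [max_div_div_right ht₀.le]
    calc max |H₂ t * x t + y t| |x t| / t ≤ (M + 1) * m / t := by gcongr
      _ ≤ (M + 1) * m / ρ₁ := by gcongr; exact ht.1
      _ = (M + 1) / ρ₁ * m := by ring
  have h := eq_zero_of_abs_deriv_le_mul_abs_self_of_eq_zero_right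
    (fun t ht => (hderiv t ht.1).continuousAt.continuousWithinAt)
    (fun t ht => (hderiv t ht.1).hasDerivWithinAt) (by simp [hx₁, hy₁]) hbound ρ ⟨hρ, le_rfl⟩
  simpa [Prod.ext_iff] using h

theorem exists_pos_and_pos_of_nonneg (hρ₁ : 0 < ρ₁)
    (hx : ∀ ρ ∈ Ici ρ₁, HasDerivAt x ((H₂ ρ * x ρ + y ρ) / ρ) ρ)
    (hy : ∀ ρ ∈ Ici ρ₁, HasDerivAt y (x ρ / ρ) ρ) (hx₁ : 0 ≤ x ρ₁) (hy₁ : 0 ≤ y ρ₁)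
    (hne : x ρ₁ ≠ 0 ∨ y ρ₁ ≠ 0) : ∃ ρ ∈ Ioi ρ₁, 0 < x ρ ∧ 0 < y ρ := by
  have hx_ev := (hx ρ₁ self_mem_Ici).eventually_pos_nhdsGT hx₁ <| by
    rcases hx₁.eq_or_lt with h | h
    · rw [← h, mul_zero, zero_add]
      exact Or.inr (div_pos (hy₁.lt_of_ne' (hne.resolve_left fun h' => h' h.symm)) hρ₁)
    · exact Or.inl h
  have hy_ev := (hy ρ₁ self_mem_Ici).eventually_pos_nhdsGT hy₁ <| by
    rcases hy₁.eq_or_lt with h | h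
    · exact Or.inr (div_pos (hx₁.lt_of_ne' (hne.resolve_right fun h' => h' h.symm)) hρ₁)
    · exact Or.inl h
  obtain ⟨ρ, ⟨hxρ, hyρ⟩, hρ⟩ := ((hx_ev.and hy_ev).and self_mem_nhdsWithin).exists
  exact ⟨ρ, hρ, hxρ, hyρ⟩

end LinearEulerSystem

theorem stmt_4_general (H₂ : ℝ → ℝ)
    (M : ℝ) (hM : ∀ ρ ∈ Set.Ioi (0 : ℝ), |H₂ ρ| ≤ M)
    (ρ₁ : ℝ) (hρ₁ : 0 < ρ₁) (x y : ℝ → ℝ)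
    (hx : ∀ ρ ∈ Set.Ici ρ₁, HasDerivAt x ((H₂ ρ * x ρ + y ρ) / ρ) ρ)
    (hy : ∀ ρ ∈ Set.Ici ρ₁, HasDerivAt y (x ρ / ρ) ρ) :
    ((∃ ρ₂ ∈ Set.Ici ρ₁, 0 < x ρ₂ ∧ 0 < y ρ₂) → Tendsto x atTop atTop) ∧
    ((∃ C : ℝ, ∀ ρ ∈ Set.Ici ρ₁, |x ρ| ≤ C ∧ |y ρ| ≤ C) →
      0 ≤ x ρ₁ → 0 ≤ y ρ₁ → ∀ ρ ∈ Set.Ici ρ₁, x ρ = 0 ∧ y ρ = 0) := by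
  have hM₁ : ∀ ρ ∈ Ici ρ₁, |H₂ ρ| ≤ M := fun ρ hρ => hM ρ (hρ₁.trans_le hρ)
  have hgrow : ∀ ρ₂ ∈ Ici ρ₁, 0 < x ρ₂ → 0 < y ρ₂ → Tendsto x atTop atTop := fun ρ₂ hρ₂ =>
    have hsub : Ici ρ₂ ⊆ Ici ρ₁ := Ici_subset_Ici.2 hρ₂
    LinearEulerSystem.tendsto_atTop_of_pos_of_pos ((abs_nonneg _).trans (hM₁ ρ₁ self_mem_Ici))
      (fun ρ hρ => neg_le_of_abs_le (hM₁ ρ (hsub hρ))) (hρ₁.trans_le hρ₂)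
      (fun ρ hρ => hx ρ (hsub hρ)) (fun ρ hρ => hy ρ (hsub hρ))
  refine ⟨fun ⟨ρ₂, hρ₂, hx₂, hy₂⟩ => hgrow ρ₂ hρ₂ hx₂ hy₂, fun ⟨C, hC⟩ hx₁ hy₁ => ?_⟩
  have hzero : x ρ₁ = 0 ∧ y ρ₁ = 0 := by
    by_contra hne
    obtain ⟨ρ₂, hρ₂, hx₂, hy₂⟩ :=
      LinearEulerSystem.exists_pos_and_pos_of_nonneg hρ₁ hx hy hx₁ hy₁ (not_and_or.1 hne)
    obtain ⟨ρ, hCρ, hρ⟩ := (((hgrow ρ₂ (mem_Ici_of_Ioi hρ₂) hx₂ hy₂).eventually_gt_atTop C).and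
      (eventually_ge_atTop ρ₁)).exists
    exact hCρ.not_ge ((le_abs_self _).trans (hC ρ hρ).1)
  exact LinearEulerSystem.eq_zero_of_eq_zero hM₁ hρ₁ hx hy hzero.1 hzero.2

/-- For the system `x' = (H₂(ρ)x + y)/ρ`, `y' = x/ρ` with `H₂` continuous and
bounded: any solution entering the open first quadrant has `x(ρ) → ∞` as
`ρ → ∞`; consequently a bounded solution starting in the closed first
quadrant is identically zero. -/
theorem stmt_4 (H₂ : ℝ → ℝ) (hH₂ : ContinuousOn H₂ (Set.Ioi 0))
    (M : ℝ) (hM : ∀ ρ ∈ Set.Ioi (0 : ℝ), |H₂ ρ| ≤ M)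
    (ρ₁ : ℝ) (hρ₁ : 0 < ρ₁) (x y : ℝ → ℝ)
    (hx : ∀ ρ ∈ Set.Ici ρ₁, HasDerivAt x ((H₂ ρ * x ρ + y ρ) / ρ) ρ)
    (hy : ∀ ρ ∈ Set.Ici ρ₁, HasDerivAt y (x ρ / ρ) ρ) :
    ((∃ ρ₂ ∈ Set.Ici ρ₁, 0 < x ρ₂ ∧ 0 < y ρ₂) → Tendsto x atTop atTop) ∧
    ((∃ C : ℝ, ∀ ρ ∈ Set.Ici ρ₁, |x ρ| ≤ C ∧ |y ρ| ≤ C) →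
      0 ≤ x ρ₁ → 0 ≤ y ρ₁ → ∀ ρ ∈ Set.Ici ρ₁, x ρ = 0 ∧ y ρ = 0) :=
  stmt_4_general H₂ M hM ρ₁ hρ₁ x y hx hy
end

section
/- Let h₂ : [0, R] → ℝ be smooth. The system of ODEs r'(ρ) = h₂'(r(ρ))/ρ, t'(ρ) = h₂(r(ρ))/ρ on ρ ∈ (0, ∞) admits solutions, and the map u(ρ, ψ) = (ψ, q⃗₀, p⃗₀, r(ρ), t(ρ)) (with q⃗₀, p⃗₀ constants) satisfies the Cauchy–Riemann equation u_ρ + J(u) (1/ρ) u_ψ = 0 for the almost complex structure J defined by J∂_t = R_α =(1/det H)(h₂' R_λ − h₁' ∂_φ) and J∂_r = (1/det H)(−h₂ R_λ + h₁ ∂_φ), where ∂_ψ u = ∂_φ. -/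
open Set

private lemma hasDerivAt_fst' {E F : Type*} [NormedAddCommGroup E] [NormedSpace ℝ E]
    [NormedAddCommGroup F] [NormedSpace ℝ F]
    {f : ℝ → E × F} {v : E × F} {t : ℝ} (h : HasDerivAt f v t) :
    HasDerivAt (fun x => (f x).1) v.1 t := by
  simpa using (h.hasFDerivAt.fst).hasDerivAt

private lemma hasDerivAt_snd' {E F : Type*} [NormedAddCommGroup E] [NormedSpace ℝ E]
    [NormedAddCommGroup F] [NormedSpace ℝ F]
    {f : ℝ → E × F} {v : E × F} {t : ℝ} (h : HasDerivAt f v t) :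
    HasDerivAt (fun x => (f x).2) v.2 t := by
  simpa using (h.hasFDerivAt.snd).hasDerivAt

/-- The ODE system `r' = h₂'(r)/ρ`, `t' = h₂(r)/ρ` admits (local) solutions,
and for any solution the map `u(ρ,ψ) = (ψ, q⃗₀, p⃗₀, r(ρ), t(ρ))` satisfies the
Cauchy–Riemann equation `u_ρ + J (1/ρ) u_ψ = 0`: at the level of tangent
vectors, `r'(ρ)·∂_r + t'(ρ)·∂_t + (1/ρ)·J∂_φ = 0`, where `J` is the almost
complex structure determined by `J∂_t = (h₂' R_λ - h₁' ∂_φ)/det H` and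
`J∂_r = (-h₂ R_λ + h₁ ∂_φ)/det H`. -/
theorem stmt_12 (R : ℝ) (hR : 0 < R) (h₁ h₂ : ℝ → ℝ)
    (hh₁ : ContDiff ℝ (⊤ : ℕ∞) h₁) (hh₂ : ContDiff ℝ (⊤ : ℕ∞) h₂)
    (detH : ℝ → ℝ)
    (hdetH : ∀ s, detH s = h₁ s * deriv h₂ s - h₂ s * deriv h₁ s)
    (hdet : ∀ s ∈ Set.Icc (0 : ℝ) R, detH s ≠ 0)
    -- tangent vectors ∂_φ, R_λ, ∂_r, ∂_t and the almost complex structure J(s)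
    (V : Type*) [AddCommGroup V] [Module ℝ V]
    (eφ eL er et : V) (hind : LinearIndependent ℝ ![eφ, eL, er, et])
    (J : ℝ → V →ₗ[ℝ] V)
    (hJt : ∀ s, (J s) et = (detH s)⁻¹ • (deriv h₂ s • eL - deriv h₁ s • eφ))
    (hJr : ∀ s, (J s) er = (detH s)⁻¹ • (-(h₂ s) • eL + h₁ s • eφ))
    (hJ2 : ∀ s, ∀ v ∈ Submodule.span ℝ ({eφ, eL, er, et} : Set V),
      (J s) ((J s) v) = -v)
    (hJspan : ∀ s, (J s) eφ ∈ Submodule.span ℝ ({er, et} : Set V) ∧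
      (J s) eL ∈ Submodule.span ℝ ({er, et} : Set V)) :
    -- local existence of solutions of the two ODEs
    (∀ ρ₀ r₀ t₀ : ℝ, 0 < ρ₀ → r₀ ∈ Set.Ioo 0 R →
      ∃ (r t : ℝ → ℝ) (ε : ℝ), 0 < ε ∧ r ρ₀ = r₀ ∧ t ρ₀ = t₀ ∧
        ∀ ρ ∈ Set.Ioo (ρ₀ - ε) (ρ₀ + ε),
          HasDerivAt r (deriv h₂ (r ρ) / ρ) ρ ∧ HasDerivAt t (h₂ (r ρ) / ρ) ρ) ∧
    -- Cauchy–Riemann equation for the associated map u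
    (∀ (r t : ℝ → ℝ) (ρ : ℝ), 0 < ρ → r ρ ∈ Set.Icc 0 R →
      HasDerivAt r (deriv h₂ (r ρ) / ρ) ρ → HasDerivAt t (h₂ (r ρ) / ρ) ρ →
      deriv r ρ • er + deriv t ρ • et + ρ⁻¹ • (J (r ρ)) eφ = 0) := by
  constructor
  · -- existence
    intro ρ₀ r₀ t₀ hρ₀ hr₀
    -- autonomize: state (σ, r, t) with σ' = 1
    set F : ℝ × ℝ × ℝ → ℝ × ℝ × ℝ :=
      fun p => (1, deriv h₂ p.2.1 / p.1, h₂ p.2.1 / p.1) with hF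
    have hd2 : ContDiff ℝ 1 (deriv h₂) := by
      have h := (contDiff_infty_iff_deriv.mp (hh₂.of_le (by simp))).2
      exact h.of_le (by simp)
    have hFc : ContDiffAt ℝ 1 F (ρ₀, r₀, t₀) := by
      have h1 : ContDiffAt ℝ 1 (fun p : ℝ × ℝ × ℝ => p.1) (ρ₀, r₀, t₀) :=
        contDiffAt_fst
      have h2 : ContDiffAt ℝ 1 (fun p : ℝ × ℝ × ℝ => p.2.1) (ρ₀, r₀, t₀) :=
        contDiffAt_snd.fst
      refine ContDiffAt.prodMk contDiffAt_const (ContDiffAt.prodMk ?_ ?_)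
      · exact (hd2.contDiffAt.comp _ h2).div h1 hρ₀.ne'
      · exact ((hh₂.of_le (by simp)).contDiffAt.comp _ h2).div h1 hρ₀.ne'
    obtain ⟨f, hf0, ε, hε, hf⟩ :=
      ContDiffAt.exists_forall_mem_closedBall_exists_eq_forall_mem_Ioo_hasDerivAt₀ (E := ℝ × ℝ × ℝ) hFc ρ₀
    -- the first component equals the identity on the interval
    have hσ : ∀ ρ ∈ Ioo (ρ₀ - ε) (ρ₀ + ε), (f ρ).1 = ρ := by
      have hder : ∀ ρ ∈ Ioo (ρ₀ - ε) (ρ₀ + ε),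
          HasDerivAt (fun x => (f x).1 - x) 0 ρ := by
        intro ρ hρ
        have := (hasDerivAt_fst' (hf ρ hρ)).sub (hasDerivAt_id ρ)
        have h' : (F (f ρ)).1 - 1 = 0 := sub_self (1 : ℝ)
        rw [h'] at this
        exact this
      have hconst : ∀ ρ ∈ Ioo (ρ₀ - ε) (ρ₀ + ε),
          (f ρ).1 - ρ = (f ρ₀).1 - ρ₀ := by
        intro ρ hρ
        have hmem₀ : ρ₀ ∈ Ioo (ρ₀ - ε) (ρ₀ + ε) := by
          constructor <;> linarith
        have := (convex_Ioo (ρ₀ - ε) (ρ₀ + ε)).is_const_of_fderivWithin_eq_zero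
          (f := fun x => (f x).1 - x) (𝕜 := ℝ)
          (fun x hx => ((hder x hx).differentiableAt).differentiableWithinAt)
          (fun x hx => by
            rw [fderivWithin_of_isOpen isOpen_Ioo hx]
            exact (hder x hx).hasFDerivAt.fderiv.trans (by ext; simp))
          hρ hmem₀
        exact this
      intro ρ hρ
      have := hconst ρ hρ
      rw [hf0] at this
      simp at this
      linarith
    refine ⟨fun ρ => (f ρ).2.1, fun ρ => (f ρ).2.2, ε, hε, by simp [hf0], by simp [hf0],
      fun ρ hρ => ?_⟩
    have h := hf ρ hρ
    have hr := hasDerivAt_fst' (hasDerivAt_snd' h)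
    have ht := hasDerivAt_snd' (hasDerivAt_snd' h)
    simp only [hF] at hr ht
    rw [hσ ρ hρ] at hr ht
    exact ⟨hr, ht⟩
  · -- Cauchy–Riemann
    intro r t ρ hρ hrange hr ht
    set s := r ρ with hs
    have hd : detH s ≠ 0 := hdet s hrange
    set A := (J s) eL with hA
    set B := (J s) eφ with hB
    have hermem : er ∈ Submodule.span ℝ ({eφ, eL, er, et} : Set V) :=
      Submodule.subset_span (by simp)
    have hetmem : et ∈ Submodule.span ℝ ({eφ, eL, er, et} : Set V) :=
      Submodule.subset_span (by simp)
    -- apply J to hJr, hJt and use J² = -1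
    have e1 : (detH s)⁻¹ • (-(h₂ s) • A + h₁ s • B) = -er := by
      have := hJ2 s er hermem
      rw [hJr s] at this
      simpa [map_smul, map_add, hA, hB] using this
    have e2 : (detH s)⁻¹ • (deriv h₂ s • A - deriv h₁ s • B) = -et := by
      have := hJ2 s et hetmem
      rw [hJt s] at this
      simpa [map_smul, map_sub, hA, hB] using this
    -- clear the (detH s)⁻¹ factors
    have e1' : (-(h₂ s)) • A + h₁ s • B = -(detH s • er) := by
      have := congrArg (fun v => detH s • v) e1
      simp only [smul_smul, mul_inv_cancel₀ hd, one_smul, smul_neg] at this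
      exact this
    have e2' : deriv h₂ s • A - deriv h₁ s • B = -(detH s • et) := by
      have := congrArg (fun v => detH s • v) e2
      simp only [smul_smul, mul_inv_cancel₀ hd, one_smul, smul_neg] at this
      exact this
    -- solve for B
    have hdB : detH s • B = detH s • (-(deriv h₂ s • er + h₂ s • et)) := by
      have h3 := congrArg (fun v => deriv h₂ s • v) e1'
      have h4 := congrArg (fun v => h₂ s • v) e2'
      have hdet' : detH s = h₁ s * deriv h₂ s - h₂ s * deriv h₁ s := hdetH s
      have comb : detH s • B = deriv h₂ s • ((-(h₂ s)) • A + h₁ s • B)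
          + h₂ s • (deriv h₂ s • A - deriv h₁ s • B) := by
        rw [hdet']
        module
      rw [comb, h3, h4]
      module
    have hBval : B = -(deriv h₂ s • er + h₂ s • et) := by
      have := congrArg (fun v => (detH s)⁻¹ • v) hdB
      simp only [smul_smul, inv_mul_cancel₀ hd, one_smul] at this
      exact this
    have hr' : deriv r ρ = deriv h₂ s / ρ := hr.deriv
    have ht' : deriv t ρ = h₂ s / ρ := ht.deriv
    rw [hr', ht', hBval]
    have hρ' : ρ ≠ 0 := hρ.ne'
    match_scalars <;> field_simp <;> ring
end

section
/- Combining the weighted energy identity with the Fourier gap inequality: if W : ℝ × S¹ → ℝ^{2n} is smooth with compact support, has vanishing Fourier components of frequencies −1, 0, 1 in ψ, and satisfies ∂_ρ W + J₀ ∂_ψ W = A(ρ) W where A : ℝ → End(ℝ^{2n}) is continuous with operator norm ‖A(ρ)‖ < C for all ρ, and if C²/4 + (sup|∂_ρ w|)/2 < 1 for the weight w, then W ≡ 0. -/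
open MeasureTheory Real Set intervalIntegral

lemma aux_zero_of_integral_zero {g : ℝ → ℝ} (hg : Continuous g) (hnn : ∀ x, 0 ≤ g x)
    {a b : ℝ} (hab : a < b) (hI : (∫ x in a..b, g x) = 0) :
    ∀ x ∈ Set.Icc a b, g x = 0 := by
  intro x hx
  by_contra hne
  have hpos : 0 < g x := lt_of_le_of_ne (hnn x) (Ne.symm hne)
  -- find an interior point where g is positive
  have hxcl : x ∈ closure (Ioo a b) := by
    rwa [closure_Ioo hab.ne]
  have hU : IsOpen (g ⁻¹' Ioi 0) := isOpen_Ioi.preimage hg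
  obtain ⟨y, hyU, hyI⟩ : ((g ⁻¹' Ioi 0) ∩ Ioo a b).Nonempty := by
    rcases mem_closure_iff.1 hxcl (g ⁻¹' Ioi 0) hU hpos with ⟨y, hy1, hy2⟩
    exact ⟨y, hy1, hy2⟩
  obtain ⟨ε, hε, hball⟩ := Metric.isOpen_iff.1 (hU.inter isOpen_Ioo) y ⟨hyU, hyI⟩
  have hsub : Metric.ball y ε ⊆ Function.support g ∩ Ioc a b := by
    intro z hz
    rcases hball hz with ⟨hz1, hz2⟩
    exact ⟨ne_of_gt hz1, Ioo_subset_Ioc_self hz2⟩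
  have hvol : 0 < volume (Function.support g ∩ Ioc a b) :=
    lt_of_lt_of_le (by simp [Real.volume_ball, hε]) (measure_mono hsub)
  have := (intervalIntegral.integral_pos_iff_support_of_nonneg_ae
    (Filter.Eventually.of_forall hnn) (hg.intervalIntegrable a b)).2 ⟨hab, hvol⟩
  rw [hI] at this
  exact lt_irrefl 0 this

lemma aux_wirtinger2 {u u' : ℝ → ℝ} (hu : ∀ x, HasDerivAt u (u' x) x)
    (hc' : Continuous u')
    (hper : ∀ x, u (x + 2 * π) = u x)
    (h0 : (∫ x in (0:ℝ)..(2 * π), u x) = 0)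
    (hcos : (∫ x in (0:ℝ)..(2 * π), Real.cos x * u x) = 0)
    (hsin : (∫ x in (0:ℝ)..(2 * π), Real.sin x * u x) = 0) :
    4 * ∫ x in (0:ℝ)..(2 * π), u x ^ 2 ≤ ∫ x in (0:ℝ)..(2 * π), u' x ^ 2 := by
  have hπ : (0:ℝ) < 2 * π := by positivity
  haveI : Fact (0 < 2 * π) := ⟨hπ⟩
  have hcu : Continuous u := by
    refine continuous_iff_continuousAt.2 fun x => (hu x).continuousAt
  have hab : (0:ℝ) < 0 + 2 * π := by linarith
  set f : ℝ → ℂ := fun x => (u x : ℂ) with hf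
  set f' : ℝ → ℂ := fun x => (u' x : ℂ) with hf'
  set c : ℤ → ℂ := fun n => fourierCoeffOn hab f n with hcdef
  set d : ℤ → ℂ := fun n => fourierCoeffOn hab f' n with hddef
  have hfc : Continuous f := Complex.continuous_ofReal.comp hcu
  have hfc' : Continuous f' := Complex.continuous_ofReal.comp hc'
  have hfd : ∀ x, HasDerivAt f (f' x) x := fun x => (hu x).ofReal_comp
  -- relation between coefficients of f' and f
  have key : ∀ n : ℤ, n ≠ 0 → d n = (Complex.I * n) * c n := by
    intro n hn
    have h := fourierCoeffOn_of_hasDerivAt hab hn (fun x _ => hfd x)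
      (hfc'.intervalIntegrable _ _)
    have hper0 : f (0 + 2 * π) - f 0 = 0 := by
      simp only [hf, hper 0, sub_self]
    rw [hper0, mul_zero, zero_sub] at h
    have hc0 : c n = 1 / (-2 * ↑π * Complex.I * ↑n) * -(((0 + 2 * π : ℝ) - (0:ℝ) : ℂ) * d n) := h
    have hne1 : (Complex.I : ℂ) ≠ 0 := Complex.I_ne_zero
    have hne2 : ((n : ℂ)) ≠ 0 := Int.cast_ne_zero.2 hn
    have hne3 : ((π : ℂ)) ≠ 0 := Complex.ofReal_ne_zero.2 Real.pi_ne_zero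
    rw [hc0]
    push_cast
    field_simp
    ring
  -- periodicity of u'
  have hper' : ∀ x, u' (x + 2 * π) = u' x := by
    intro x
    have h1 : HasDerivAt (fun y => u (y + 2 * π)) (u' (x + 2 * π)) x := by
      simpa [Function.comp_def] using (hu (x + 2 * π)).comp x ((hasDerivAt_id x).add_const (2 * π))
    have h2 : (fun y => u (y + 2 * π)) = u := funext hper
    rw [h2] at h1
    exact h1.unique (hu x)
  -- pointwise description of fourier monomials
  have hfou : ∀ (m : ℤ) (x : ℝ), (fourier m ((x:ℝ) : AddCircle (0 + 2 * π - 0)) : ℂ)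
      = Complex.exp (((m * x : ℝ) : ℂ) * Complex.I) := by
    intro m x
    rw [fourier_coe_apply]
    congr 1
    have hπc : ((π : ℝ) : ℂ) ≠ 0 := Complex.ofReal_ne_zero.2 Real.pi_ne_zero
    push_cast
    field_simp
    ring
  have hsmul : ∀ (m : ℤ) (x : ℝ), (fourier m ((x:ℝ) : AddCircle (0 + 2 * π - 0)) : ℂ) • f x
      = ((Real.cos (m * x) * u x : ℝ) : ℂ) + ((Real.sin (m * x) * u x : ℝ) : ℂ) * Complex.I := by
    intro m x
    rw [hfou, Complex.exp_mul_I, ← Complex.ofReal_cos, ← Complex.ofReal_sin]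
    simp only [hf, smul_eq_mul]
    push_cast
    ring
  -- vanishing of the coefficients -1, 0, 1
  have hcoeff : ∀ m : ℤ, (∫ x in (0:ℝ)..(2 * π), Real.cos (m * x) * u x) = 0 →
      (∫ x in (0:ℝ)..(2 * π), Real.sin (m * x) * u x) = 0 → c (-m) = 0 := by
    intro m hcc hss
    show fourierCoeffOn hab f (-m) = 0
    rw [fourierCoeffOn_eq_integral, neg_neg]
    have hz : (∫ x in (0:ℝ)..(0 + 2 * π), (fourier m ((x:ℝ) : AddCircle (0 + 2 * π - 0)) : ℂ) • f x) = 0 := by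
      rw [intervalIntegral.integral_congr (g := fun x =>
          ((Real.cos (m * x) * u x : ℝ) : ℂ) + ((Real.sin (m * x) * u x : ℝ) : ℂ) * Complex.I)
          (fun x _ => hsmul m x)]
      have hi1 : Continuous fun x : ℝ => ((Real.cos (m * x) * u x : ℝ) : ℂ) := by fun_prop
      have hi2 : Continuous fun x : ℝ => ((Real.sin (m * x) * u x : ℝ) : ℂ) * Complex.I := by fun_prop
      rw [intervalIntegral.integral_add (hi1.intervalIntegrable _ _) (hi2.intervalIntegrable _ _),
        intervalIntegral.integral_mul_const]
      rw [intervalIntegral.integral_ofReal, intervalIntegral.integral_ofReal]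
      rw [zero_add, hcc, hss]
      simp
    rw [hz, smul_zero]
  have hc0 : c 0 = 0 := by
    have := hcoeff 0 (by simpa using h0) (by simp)
    simpa using this
  have hcm1 : c (-1) = 0 := by
    refine hcoeff 1 ?_ ?_
    · simpa using hcos
    · simpa using hsin
  have hc1 : c 1 = 0 := by
    have := hcoeff (-1) (by
      have : ∀ x : ℝ, Real.cos (((-1 : ℤ) : ℝ) * x) * u x = Real.cos x * u x := by
        intro x; push_cast; rw [neg_one_mul, Real.cos_neg]
      rw [intervalIntegral.integral_congr (fun x _ => this x)]
      exact hcos) (by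
      have : ∀ x : ℝ, Real.sin (((-1 : ℤ) : ℝ) * x) * u x = -(Real.sin x * u x) := by
        intro x; push_cast; rw [neg_one_mul, Real.sin_neg, neg_mul]
      rw [intervalIntegral.integral_congr (fun x _ => this x), intervalIntegral.integral_neg, hsin,
        neg_zero])
    simpa using this
  -- Parseval
  have parseval : ∀ v : ℝ → ℝ, Continuous v → (∀ x, v (x + 2 * π) = v x) →
      Summable (fun n : ℤ => ‖fourierCoeffOn hab (fun x => (v x : ℂ)) n‖ ^ 2) ∧
      (∫ x in (0:ℝ)..(2 * π), v x ^ 2)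
        = (2 * π) * ∑' n : ℤ, ‖fourierCoeffOn hab (fun x => (v x : ℂ)) n‖ ^ 2 := by
    intro v hv hvper
    set g : ℝ → ℂ := fun x => (v x : ℂ) with hg
    have hgc : Continuous g := Complex.continuous_ofReal.comp hv
    have hgper : g 0 = g (2 * π) := by simp only [hg]; rw [← hvper 0, zero_add]
    set F : C(AddCircle (2 * π), ℂ) :=
      ⟨AddCircle.liftIco (2 * π) 0 g, AddCircle.liftIco_zero_continuous hgper hgc.continuousOn⟩
      with hF
    set L := ContinuousMap.toLp (E := ℂ) 2 AddCircle.haarAddCircle ℂ F with hL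
    have hLcoeff : ∀ n, fourierCoeff L n = fourierCoeffOn hab g n := by
      intro n
      rw [fourierCoeff_toLp]
      exact fourierCoeff_liftIco_eq g n
    have hP := tsum_sq_fourierCoeff L
    have hS : Summable fun n : ℤ => ‖fourierCoeffOn hab g n‖ ^ 2 := by
      have h := (lp.hasSum_norm (p := 2) (by norm_num) (fourierBasis.repr L)).summable
      refine h.congr fun i => ?_
      rw [fourierBasis_repr, hLcoeff]
      norm_num
    constructor
    · exact hS
    -- compute the L² norm integral
    have hcongr : (fun t : AddCircle (2 * π) => ‖(L : AddCircle (2 * π) → ℂ) t‖ ^ 2)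
        =ᵐ[AddCircle.haarAddCircle] fun t => ‖F t‖ ^ 2 := by
      filter_upwards [ContinuousMap.coeFn_toLp (p := 2) (𝕜 := ℂ) AddCircle.haarAddCircle F] with t ht
      rw [ht]
    have h1 : (∫ t : AddCircle (2 * π), ‖(L : AddCircle (2 * π) → ℂ) t‖ ^ 2 ∂AddCircle.haarAddCircle)
        = ∫ t : AddCircle (2 * π), ‖F t‖ ^ 2 ∂AddCircle.haarAddCircle := integral_congr_ae hcongr
    have h2 : (∫ t : AddCircle (2 * π), ‖F t‖ ^ 2 ∂(volume))
        = (2 * π) * ∫ t : AddCircle (2 * π), ‖F t‖ ^ 2 ∂AddCircle.haarAddCircle := by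
      rw [AddCircle.volume_eq_smul_haarAddCircle (T := 2 * π), MeasureTheory.integral_smul_measure,
        ENNReal.toReal_ofReal hπ.le, smul_eq_mul]
    have h3 : (∫ x in (0:ℝ)..(0 + 2 * π), ‖F ((x : ℝ) : AddCircle (2 * π))‖ ^ 2)
        = ∫ t : AddCircle (2 * π), ‖F t‖ ^ 2 ∂(volume) := by
      exact AddCircle.intervalIntegral_preimage (2 * π) 0 (fun b => ‖F b‖ ^ 2)
    have h4 : (∫ x in (0:ℝ)..(0 + 2 * π), ‖F ((x : ℝ) : AddCircle (2 * π))‖ ^ 2)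
        = ∫ x in (0:ℝ)..(2 * π), v x ^ 2 := by
      rw [zero_add]
      apply intervalIntegral.integral_congr
      intro x hx
      have hx' : x ∈ Set.Icc (0:ℝ) (2 * π) := by
        rwa [Set.uIcc_of_le (by linarith : (0:ℝ) ≤ 2 * π)] at hx
      have hval : F ((x : ℝ) : AddCircle (2 * π)) = g x := by
        rcases lt_or_eq_of_le hx'.2 with hlt | heq
        · show AddCircle.liftIco (2 * π) 0 g ((x : ℝ) : AddCircle (2 * π)) = g x
          exact AddCircle.liftIco_coe_apply
            (show x ∈ Set.Ico (0:ℝ) (0 + 2 * π) by rw [zero_add]; exact ⟨hx'.1, hlt⟩)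
        · have hcast : ((x : ℝ) : AddCircle (2 * π)) = ((0 : ℝ) : AddCircle (2 * π)) := by
            rw [heq]
            have h0' : ((0:ℝ) : AddCircle (2 * π)) = 0 := by norm_cast
            rw [h0']
            exact AddCircle.coe_period (2 * π)
          show AddCircle.liftIco (2 * π) 0 g ((x : ℝ) : AddCircle (2 * π)) = g x
          rw [hcast, AddCircle.liftIco_coe_apply
            (show (0:ℝ) ∈ Set.Ico (0:ℝ) (0 + 2 * π) from ⟨le_refl 0, by linarith⟩)]
          rw [heq, ← hgper]
      show ‖F ((x : ℝ) : AddCircle (2 * π))‖ ^ 2 = v x ^ 2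
      rw [hval]
      simp only [hg, Complex.norm_real, Real.norm_eq_abs, sq_abs]
    calc (∫ x in (0:ℝ)..(2 * π), v x ^ 2)
        = ∫ x in (0:ℝ)..(0 + 2 * π), ‖F ((x : ℝ) : AddCircle (2 * π))‖ ^ 2 := h4.symm
      _ = ∫ t : AddCircle (2 * π), ‖F t‖ ^ 2 ∂(volume) := h3
      _ = (2 * π) * ∫ t : AddCircle (2 * π), ‖F t‖ ^ 2 ∂AddCircle.haarAddCircle := h2
      _ = (2 * π) * ∫ t : AddCircle (2 * π), ‖(L : AddCircle (2 * π) → ℂ) t‖ ^ 2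
            ∂AddCircle.haarAddCircle := by rw [h1]
      _ = (2 * π) * ∑' n : ℤ, ‖fourierCoeff L n‖ ^ 2 := by rw [hP]
      _ = _ := by simp_rw [hLcoeff]
  obtain ⟨S1, e1⟩ := parseval u hcu hper
  obtain ⟨S2, e2⟩ := parseval u' hc' hper'
  have S1' : Summable fun n : ℤ => ‖c n‖ ^ 2 := S1
  have S2' : Summable fun n : ℤ => ‖d n‖ ^ 2 := S2
  have e1' : (∫ x in (0:ℝ)..(2 * π), u x ^ 2) = 2 * π * ∑' n : ℤ, ‖c n‖ ^ 2 := e1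
  have e2' : (∫ x in (0:ℝ)..(2 * π), u' x ^ 2) = 2 * π * ∑' n : ℤ, ‖d n‖ ^ 2 := e2
  have hpt : ∀ n : ℤ, 4 * ‖c n‖ ^ 2 ≤ ‖d n‖ ^ 2 := by
    intro n
    by_cases h0' : n = 0
    · subst h0'; rw [hc0]; simpa using sq_nonneg ‖d 0‖
    by_cases h1' : n = 1
    · subst h1'; rw [hc1]; simpa using sq_nonneg ‖d 1‖
    by_cases hm1' : n = -1
    · subst hm1'; rw [hcm1]; simpa using sq_nonneg ‖d (-1)‖
    · rw [key n h0']
      have h2 : (2:ℝ) ≤ |(n:ℝ)| := by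
        rw [← Int.cast_abs]
        have : (2:ℤ) ≤ |n| := by
          rcases le_or_gt 0 n with h | h
          · rw [abs_of_nonneg h]; omega
          · rw [abs_of_neg h]; omega
        exact_mod_cast this
      have hnorm : ‖Complex.I * ↑n * c n‖ = |(n:ℝ)| * ‖c n‖ := by
        rw [norm_mul, norm_mul, Complex.norm_I, one_mul]
        norm_num
      rw [hnorm, mul_pow]
      have h4 : (4:ℝ) ≤ |(n:ℝ)| ^ 2 := by nlinarith
      exact mul_le_mul_of_nonneg_right h4 (sq_nonneg _)
  have hsum := Summable.tsum_le_tsum hpt (S1'.mul_left 4) S2'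
  rw [tsum_mul_left] at hsum
  rw [e1', e2']
  nlinarith [Real.pi_pos, hsum, tsum_nonneg (L := SummationFilter.unconditional ℤ) (fun n : ℤ => sq_nonneg ‖c n‖)]

set_option maxHeartbeats 1000000

/-- Combination of the weighted energy identity and the Fourier gap
inequality: a smooth compactly supported `W : ℝ × S¹ → ℝ^{2n}` with vanishing
Fourier modes of frequencies `-1, 0, 1` in `ψ`, satisfying
`∂_ρ W + J₀ ∂_ψ W = A(ρ) W` with `‖A(ρ)‖ < C`, vanishes identically provided
`C²/4 + (sup|∂_ρ w|)/2 < 1` for the weight `w`. -/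
theorem stmt_16 (n : ℕ) (w : ℝ → ℝ) (hw : ContDiff ℝ (⊤ : ℕ∞) w)
    (Cw : ℝ) (hCw : ∀ ρ, |deriv w ρ| ≤ Cw)
    (W : ℝ × ℝ → EuclideanSpace ℝ (Fin (2 * n)))
    (hW : ContDiff ℝ (⊤ : ℕ∞) W)
    (hper : ∀ ρ ψ, W (ρ, ψ + 2 * π) = W (ρ, ψ))
    (hsupp : ∃ K : ℝ, ∀ ρ ψ : ℝ, K < |ρ| → W (ρ, ψ) = 0)
    -- vanishing Fourier components of frequencies 0, ±1
    (hF0 : ∀ ρ : ℝ, (∫ ψ in (0 : ℝ)..(2 * π), W (ρ, ψ)) = 0)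
    (hFcos : ∀ ρ : ℝ, (∫ ψ in (0 : ℝ)..(2 * π), Real.cos ψ • W (ρ, ψ)) = 0)
    (hFsin : ∀ ρ : ℝ, (∫ ψ in (0 : ℝ)..(2 * π), Real.sin ψ • W (ρ, ψ)) = 0)
    (J₀ : EuclideanSpace ℝ (Fin (2 * n)) →ₗ[ℝ] EuclideanSpace ℝ (Fin (2 * n)))
    (hJ₀sq : ∀ v, J₀ (J₀ v) = -v)
    (hJ₀orth : ∀ v u, @inner ℝ _ _ (J₀ v) (J₀ u) = @inner ℝ _ _ v u)
    (A : ℝ → EuclideanSpace ℝ (Fin (2 * n)) →L[ℝ] EuclideanSpace ℝ (Fin (2 * n)))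
    (hA : Continuous fun ρ => A ρ)
    (C : ℝ) (hAC : ∀ ρ, ‖A ρ‖ < C)
    (hCR : ∀ ρ ψ : ℝ,
      deriv (fun s => W (s, ψ)) ρ + J₀ (deriv (fun s => W (ρ, s)) ψ) = A ρ (W (ρ, ψ)))
    (hsmall : C ^ 2 / 4 + Cw / 2 < 1) :
    ∀ ρ ψ : ℝ, W (ρ, ψ) = 0 := by
  obtain ⟨K, hK⟩ := hsupp
  set R : ℝ := |K| + 1 with hRdef
  have hKR : K < R := lt_of_le_of_lt (le_abs_self K) (by rw [hRdef]; linarith)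
  have hRpos : 0 < R := by rw [hRdef]; positivity
  have h2π : (0:ℝ) < 2 * π := by positivity
  -- continuous linear version of J₀
  set Jc : EuclideanSpace ℝ (Fin (2 * n)) →L[ℝ] EuclideanSpace ℝ (Fin (2 * n)) :=
    LinearMap.toContinuousLinearMap J₀ with hJcdef
  have hJc : ∀ x, Jc x = J₀ x := fun x => rfl
  -- partial derivatives
  have hWd : Differentiable ℝ W := hW.differentiable (by simp)
  set Wρ : ℝ × ℝ → EuclideanSpace ℝ (Fin (2 * n)) :=
    fun p => fderiv ℝ W p (1, 0) with hWρdef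
  set Wψ : ℝ × ℝ → EuclideanSpace ℝ (Fin (2 * n)) :=
    fun p => fderiv ℝ W p (0, 1) with hWψdef
  have hρ : ∀ ρ ψ : ℝ, HasDerivAt (fun s => W (s, ψ)) (Wρ (ρ, ψ)) ρ := by
    intro ρ ψ
    have h1 : HasDerivAt (fun s : ℝ => ((s, ψ) : ℝ × ℝ)) ((1:ℝ), (0:ℝ)) ρ :=
      (hasDerivAt_id ρ).prodMk (hasDerivAt_const ρ ψ)
    exact (hWd (ρ, ψ)).hasFDerivAt.comp_hasDerivAt ρ h1
  have hψ : ∀ ρ ψ : ℝ, HasDerivAt (fun t => W (ρ, t)) (Wψ (ρ, ψ)) ψ := by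
    intro ρ ψ
    have h1 : HasDerivAt (fun t : ℝ => ((ρ, t) : ℝ × ℝ)) ((0:ℝ), (1:ℝ)) ψ :=
      (hasDerivAt_const ψ ρ).prodMk (hasDerivAt_id ψ)
    exact (hWd (ρ, ψ)).hasFDerivAt.comp_hasDerivAt ψ h1
  have hWρs : ContDiff ℝ (⊤ : ℕ∞) Wρ := (hW.fderiv_right (by simp)).clm_apply contDiff_const
  have hWψs : ContDiff ℝ (⊤ : ℕ∞) Wψ := (hW.fderiv_right (by simp)).clm_apply contDiff_const
  have hWρc : Continuous Wρ := hWρs.continuous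
  have hWψc : Continuous Wψ := hWψs.continuous
  have hWc : Continuous W := hW.continuous
  -- Cauchy-Riemann type equation in terms of Wρ, Wψ
  have hCR' : ∀ ρ ψ : ℝ, Wρ (ρ, ψ) + Jc (Wψ (ρ, ψ)) = A ρ (W (ρ, ψ)) := by
    intro ρ ψ
    have h := hCR ρ ψ
    rwa [(hρ ρ ψ).deriv, (hψ ρ ψ).deriv, ← hJc] at h
  -- mixed second partial derivative
  have hF1d : Differentiable ℝ (fderiv ℝ W) := (hW.fderiv_right (m := (⊤ : ℕ∞)) (by simp)).differentiable (by simp)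
  set Wm : ℝ × ℝ → EuclideanSpace ℝ (Fin (2 * n)) :=
    fun p => fderiv ℝ (fderiv ℝ W) p (0, 1) (1, 0) with hWmdef
  have hWms : ContDiff ℝ (⊤ : ℕ∞) Wm :=
    (((hW.fderiv_right (m := (⊤ : ℕ∞)) (by simp)).fderiv_right (m := (⊤ : ℕ∞)) (by simp)).clm_apply
      contDiff_const).clm_apply contDiff_const
  have hWmc : Continuous Wm := hWms.continuous
  have hmix1 : ∀ ρ ψ : ℝ, HasDerivAt (fun t => Wρ (ρ, t)) (Wm (ρ, ψ)) ψ := by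
    intro ρ ψ
    have h1 : HasFDerivAt (fderiv ℝ W) (fderiv ℝ (fderiv ℝ W) (ρ, ψ)) (ρ, ψ) :=
      (hF1d (ρ, ψ)).hasFDerivAt
    have h2 := h1.clm_apply (hasFDerivAt_const ((1:ℝ), (0:ℝ)) ((ρ, ψ) : ℝ × ℝ))
    have h3 := h2.comp_hasDerivAt ψ ((hasDerivAt_const ψ ρ).prodMk (hasDerivAt_id ψ))
    simpa [hWmdef, Function.comp_def] using h3
  have hmix2 : ∀ ρ ψ : ℝ, HasDerivAt (fun s => Wψ (s, ψ)) (Wm (ρ, ψ)) ρ := by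
    intro ρ ψ
    have h1 : HasFDerivAt (fderiv ℝ W) (fderiv ℝ (fderiv ℝ W) (ρ, ψ)) (ρ, ψ) :=
      (hF1d (ρ, ψ)).hasFDerivAt
    have h2 := h1.clm_apply (hasFDerivAt_const ((0:ℝ), (1:ℝ)) ((ρ, ψ) : ℝ × ℝ))
    have h3 := h2.comp_hasDerivAt ρ ((hasDerivAt_id ρ).prodMk (hasDerivAt_const ρ ψ))
    have hsym : fderiv ℝ (fderiv ℝ W) (ρ, ψ) (1, 0) (0, 1)
        = fderiv ℝ (fderiv ℝ W) (ρ, ψ) (0, 1) (1, 0) :=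
      second_derivative_symmetric (fun y => (hWd y).hasFDerivAt) h1 _ _
    have h4 : HasDerivAt (fun s => Wψ (s, ψ))
        (fderiv ℝ (fderiv ℝ W) (ρ, ψ) (1, 0) (0, 1)) ρ := by
      simpa [Function.comp_def] using h3
    rw [hsym] at h4
    exact h4
  -- periodicity of the derivatives
  have hWρper : ∀ ρ ψ : ℝ, Wρ (ρ, ψ + 2 * π) = Wρ (ρ, ψ) := by
    intro ρ ψ
    have h1 := hρ ρ (ψ + 2 * π)
    have h2 : (fun s => W (s, ψ + 2 * π)) = fun s => W (s, ψ) := funext fun s => hper s ψ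
    rw [h2] at h1
    exact h1.unique (hρ ρ ψ)
  have hWψper : ∀ ρ ψ : ℝ, Wψ (ρ, ψ + 2 * π) = Wψ (ρ, ψ) := by
    intro ρ ψ
    have h0 : HasDerivAt (fun t : ℝ => t + 2 * π) 1 ψ := by
      simpa using (hasDerivAt_id ψ).add_const (2 * π)
    have h1 : HasDerivAt (fun t => W (ρ, t + 2 * π)) (Wψ (ρ, ψ + 2 * π)) ψ := by
      have := (hψ ρ (ψ + 2 * π)).scomp ψ h0
      simpa [Function.comp_def] using this
    have h2 : (fun t => W (ρ, t + 2 * π)) = fun t => W (ρ, t) := funext fun t => hper ρ t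
    rw [h2] at h1
    exact h1.unique (hψ ρ ψ)
  -- properties of J
  have hJnormsq : ∀ x, ‖Jc x‖ ^ 2 = ‖x‖ ^ 2 := by
    intro x
    rw [← real_inner_self_eq_norm_sq, ← real_inner_self_eq_norm_sq, hJc]
    exact hJ₀orth x x
  have hJanti : ∀ x y, (inner ℝ x (Jc y) : ℝ) = -(inner ℝ (Jc x) y : ℝ) := by
    intro x y
    rw [hJc x, hJc y]
    calc (inner ℝ x (J₀ y) : ℝ)
        = (inner ℝ (J₀ x) (J₀ (J₀ y)) : ℝ) := (hJ₀orth x (J₀ y)).symm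
      _ = (inner ℝ (J₀ x) (-y) : ℝ) := by rw [hJ₀sq]
      _ = -(inner ℝ (J₀ x) y : ℝ) := inner_neg_right _ _
  -- scalar fields
  set e0 : ℝ × ℝ → ℝ := fun p => ‖W p‖ ^ 2 with he0def
  set e1 : ℝ × ℝ → ℝ := fun p => ‖Wρ p‖ ^ 2 with he1def
  set e2 : ℝ × ℝ → ℝ := fun p => ‖Wψ p‖ ^ 2 with he2def
  set cr : ℝ × ℝ → ℝ := fun p => (inner ℝ (Wρ p) (Jc (Wψ p)) : ℝ) with hcrdef
  set eA : ℝ × ℝ → ℝ := fun p => ‖A p.1 (W p)‖ ^ 2 with heAdef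
  have he0c : Continuous e0 := hWc.norm.pow 2
  have he1c : Continuous e1 := hWρc.norm.pow 2
  have he2c : Continuous e2 := hWψc.norm.pow 2
  have hcrc : Continuous cr := (hWρc.inner (Jc.continuous.comp hWψc))
  have hAWc : Continuous fun p : ℝ × ℝ => A p.1 (W p) :=
    (hA.comp continuous_fst).clm_apply hWc
  have heAc : Continuous eA := hAWc.norm.pow 2
  -- pointwise energy identity
  have hEpt : ∀ p : ℝ × ℝ, eA p = e1 p + e2 p + 2 * cr p := by
    intro p
    have h1 : A p.1 (W p) = Wρ p + Jc (Wψ p) := by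
      obtain ⟨ρ, ψ⟩ := p
      exact (hCR' ρ ψ).symm
    simp only [heAdef, he1def, he2def, hcrdef]
    rw [h1, norm_add_sq_real, hJnormsq]
    ring
  -- pointwise bound by C
  have hC0 : (0:ℝ) ≤ C := le_of_lt (lt_of_le_of_lt (norm_nonneg (A 0)) (hAC 0))
  have hbdpt : ∀ p : ℝ × ℝ, eA p ≤ C ^ 2 * e0 p := by
    intro p
    have h1 : ‖A p.1 (W p)‖ ≤ C * ‖W p‖ := by
      calc ‖A p.1 (W p)‖ ≤ ‖A p.1‖ * ‖W p‖ := (A p.1).le_opNorm _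
        _ ≤ C * ‖W p‖ := mul_le_mul_of_nonneg_right (le_of_lt (hAC p.1)) (norm_nonneg _)
    have h2 : ‖A p.1 (W p)‖ ^ 2 ≤ (C * ‖W p‖) ^ 2 := by
      have := norm_nonneg (A p.1 (W p))
      nlinarith
    simpa only [heAdef, he0def, mul_pow] using h2
  -- slice integrals
  set g0 : ℝ → ℝ := fun ρ => ∫ ψ in (0:ℝ)..(2 * π), e0 (ρ, ψ) with hg0def
  set g1 : ℝ → ℝ := fun ρ => ∫ ψ in (0:ℝ)..(2 * π), e1 (ρ, ψ) with hg1def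
  set g2 : ℝ → ℝ := fun ρ => ∫ ψ in (0:ℝ)..(2 * π), e2 (ρ, ψ) with hg2def
  set gc : ℝ → ℝ := fun ρ => ∫ ψ in (0:ℝ)..(2 * π), cr (ρ, ψ) with hgcdef
  set gA : ℝ → ℝ := fun ρ => ∫ ψ in (0:ℝ)..(2 * π), eA (ρ, ψ) with hgAdef
  have hparam : ∀ {F : ℝ × ℝ → ℝ}, Continuous F →
      Continuous fun ρ => ∫ ψ in (0:ℝ)..(2 * π), F (ρ, ψ) := by
    intro F hF
    exact intervalIntegral.continuous_parametric_intervalIntegral_of_continuous'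
      (f := fun ρ ψ => F (ρ, ψ)) (by exact hF.comp (continuous_fst.prodMk continuous_snd))
      0 (2 * π)
  have hg0c : Continuous g0 := hparam he0c
  have hg1c : Continuous g1 := hparam he1c
  have hg2c : Continuous g2 := hparam he2c
  have hgcc : Continuous gc := hparam hcrc
  have hgAc : Continuous gA := hparam heAc
  -- slice integrability
  have hIψ : ∀ (F : ℝ × ℝ → ℝ), Continuous F → ∀ ρ : ℝ,
      IntervalIntegrable (fun ψ => F (ρ, ψ)) volume 0 (2 * π) := by
    intro F hF ρ
    exact (hF.comp (Continuous.prodMk_right ρ)).intervalIntegrable _ _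
  -- slice energy identity
  have hsplit : ∀ ρ, gA ρ = g1 ρ + g2 ρ + 2 * gc ρ := by
    intro ρ
    calc gA ρ = ∫ ψ in (0:ℝ)..(2 * π), (e1 (ρ, ψ) + e2 (ρ, ψ) + 2 * cr (ρ, ψ)) :=
          intervalIntegral.integral_congr fun ψ _ => hEpt (ρ, ψ)
      _ = (∫ ψ in (0:ℝ)..(2 * π), (e1 (ρ, ψ) + e2 (ρ, ψ)))
            + ∫ ψ in (0:ℝ)..(2 * π), 2 * cr (ρ, ψ) :=
          intervalIntegral.integral_add ((hIψ _ he1c ρ).add (hIψ _ he2c ρ))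
            ((hIψ _ hcrc ρ).const_mul 2)
      _ = g1 ρ + g2 ρ + 2 * gc ρ := by
          rw [intervalIntegral.integral_add (hIψ _ he1c ρ) (hIψ _ he2c ρ),
            intervalIntegral.integral_const_mul]
  -- slice bound by C
  have hbd : ∀ ρ, gA ρ ≤ C ^ 2 * g0 ρ := by
    intro ρ
    have h := intervalIntegral.integral_mono_on (le_of_lt h2π) (hIψ _ heAc ρ)
      ((hIψ _ he0c ρ).const_mul (C ^ 2)) (fun ψ _ => hbdpt (ρ, ψ))
    rwa [intervalIntegral.integral_const_mul] at h
  -- nonnegativity of slice integrals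
  have hg0nn : ∀ ρ, 0 ≤ g0 ρ := fun ρ =>
    intervalIntegral.integral_nonneg (le_of_lt h2π) (fun ψ _ => by positivity)
  have hg1nn : ∀ ρ, 0 ≤ g1 ρ := fun ρ =>
    intervalIntegral.integral_nonneg (le_of_lt h2π) (fun ψ _ => by positivity)
  -- Fourier gap inequality on each slice
  have hnormsum : ∀ v : EuclideanSpace ℝ (Fin (2 * n)), ‖v‖ ^ 2 = ∑ i, (v i) ^ 2 := by
    intro v
    rw [EuclideanSpace.norm_eq, Real.sq_sqrt (by positivity)]
    refine Finset.sum_congr rfl fun i _ => ?_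
    rw [Real.norm_eq_abs, sq_abs]
  have hgap : ∀ ρ, 4 * g0 ρ ≤ g2 ρ := by
    intro ρ
    have hWi : ∀ i : Fin (2 * n), Continuous fun ψ => W (ρ, ψ) i := fun i =>
      (EuclideanSpace.proj (𝕜 := ℝ) i).continuous.comp (hWc.comp (Continuous.prodMk_right ρ))
    have hWψi : ∀ i : Fin (2 * n), Continuous fun ψ => Wψ (ρ, ψ) i := fun i =>
      (EuclideanSpace.proj (𝕜 := ℝ) i).continuous.comp (hWψc.comp (Continuous.prodMk_right ρ))
    have hg0' : g0 ρ = ∑ i : Fin (2 * n), ∫ ψ in (0:ℝ)..(2 * π), (W (ρ, ψ) i) ^ 2 :=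
      calc g0 ρ = ∫ ψ in (0:ℝ)..(2 * π), ∑ i : Fin (2 * n), (W (ρ, ψ) i) ^ 2 :=
          intervalIntegral.integral_congr fun ψ _ => hnormsum _
        _ = ∑ i : Fin (2 * n), ∫ ψ in (0:ℝ)..(2 * π), (W (ρ, ψ) i) ^ 2 :=
          intervalIntegral.integral_finset_sum fun i _ =>
            ((hWi i).pow 2).intervalIntegrable _ _
    have hg2' : g2 ρ = ∑ i : Fin (2 * n), ∫ ψ in (0:ℝ)..(2 * π), (Wψ (ρ, ψ) i) ^ 2 :=
      calc g2 ρ = ∫ ψ in (0:ℝ)..(2 * π), ∑ i : Fin (2 * n), (Wψ (ρ, ψ) i) ^ 2 :=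
          intervalIntegral.integral_congr fun ψ _ => hnormsum _
        _ = ∑ i : Fin (2 * n), ∫ ψ in (0:ℝ)..(2 * π), (Wψ (ρ, ψ) i) ^ 2 :=
          intervalIntegral.integral_finset_sum fun i _ =>
            ((hWψi i).pow 2).intervalIntegrable _ _
    have hcomp : ∀ i : Fin (2 * n),
        4 * (∫ ψ in (0:ℝ)..(2 * π), (W (ρ, ψ) i) ^ 2)
          ≤ ∫ ψ in (0:ℝ)..(2 * π), (Wψ (ρ, ψ) i) ^ 2 := by
      intro i
      refine aux_wirtinger2 (u := fun ψ => W (ρ, ψ) i) (u' := fun ψ => Wψ (ρ, ψ) i)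
        ?_ (hWψi i) ?_ ?_ ?_ ?_
      · intro ψ
        exact (EuclideanSpace.proj (𝕜 := ℝ) i).hasFDerivAt.comp_hasDerivAt ψ (hψ ρ ψ)
      · intro ψ
        exact congrArg (fun v : EuclideanSpace ℝ (Fin (2 * n)) => v i) (hper ρ ψ)
      · have h1 := (EuclideanSpace.proj (𝕜 := ℝ) i).intervalIntegral_comp_comm
          ((show Continuous fun ψ : ℝ => W (ρ, ψ) from hWc.comp
            (Continuous.prodMk_right ρ)).intervalIntegrable (μ := volume) (0:ℝ) (2 * π))
        rw [hF0 ρ, map_zero] at h1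
        exact h1
      · have h1 := (EuclideanSpace.proj (𝕜 := ℝ) i).intervalIntegral_comp_comm
          ((show Continuous fun ψ : ℝ => Real.cos ψ • W (ρ, ψ) from continuous_cos.smul
            (hWc.comp (Continuous.prodMk_right ρ))).intervalIntegrable (μ := volume) (0:ℝ) (2 * π))
        rw [hFcos ρ, map_zero] at h1
        refine Eq.trans ?_ h1
        refine intervalIntegral.integral_congr fun ψ _ => ?_
        simp
      · have h1 := (EuclideanSpace.proj (𝕜 := ℝ) i).intervalIntegral_comp_comm
          ((show Continuous fun ψ : ℝ => Real.sin ψ • W (ρ, ψ) from continuous_sin.smul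
            (hWc.comp (Continuous.prodMk_right ρ))).intervalIntegrable (μ := volume) (0:ℝ) (2 * π))
        rw [hFsin ρ, map_zero] at h1
        refine Eq.trans ?_ h1
        refine intervalIntegral.integral_congr fun ψ _ => ?_
        simp
    rw [hg0', hg2', Finset.mul_sum]
    exact Finset.sum_le_sum fun i _ => hcomp i
  -- cross term
  set P : ℝ × ℝ → ℝ := fun p => (inner ℝ (W p) (Jc (Wψ p)) : ℝ) with hPdef
  set Q : ℝ × ℝ → ℝ := fun p => (inner ℝ (W p) (Jc (Wρ p)) : ℝ) with hQdef
  set dP : ℝ × ℝ → ℝ := fun p =>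
    (inner ℝ (W p) (Jc (Wm p)) : ℝ) + (inner ℝ (Wρ p) (Jc (Wψ p)) : ℝ) with hdPdef
  set dQ : ℝ × ℝ → ℝ := fun p =>
    (inner ℝ (W p) (Jc (Wm p)) : ℝ) + (inner ℝ (Wψ p) (Jc (Wρ p)) : ℝ) with hdQdef
  have hdPc : Continuous dP :=
    (hWc.inner (Jc.continuous.comp hWmc)).add (hWρc.inner (Jc.continuous.comp hWψc))
  have hdQc : Continuous dQ :=
    (hWc.inner (Jc.continuous.comp hWmc)).add (hWψc.inner (Jc.continuous.comp hWρc))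
  have hdP : ∀ ρ ψ : ℝ, HasDerivAt (fun s => P (s, ψ)) (dP (ρ, ψ)) ρ := by
    intro ρ ψ
    have h1 : HasDerivAt (fun s => Jc (Wψ (s, ψ))) (Jc (Wm (ρ, ψ))) ρ :=
      Jc.hasFDerivAt.comp_hasDerivAt ρ (hmix2 ρ ψ)
    exact (hρ ρ ψ).inner (𝕜 := ℝ) h1
  have hdQ : ∀ ρ ψ : ℝ, HasDerivAt (fun t => Q (ρ, t)) (dQ (ρ, ψ)) ψ := by
    intro ρ ψ
    have h1 : HasDerivAt (fun t => Jc (Wρ (ρ, t))) (Jc (Wm (ρ, ψ))) ψ :=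
      Jc.hasFDerivAt.comp_hasDerivAt ψ (hmix1 ρ ψ)
    exact (hψ ρ ψ).inner (𝕜 := ℝ) h1
  have hcr2 : ∀ p : ℝ × ℝ, cr p = (dP p - dQ p) / 2 := by
    intro p
    have h1 : (inner ℝ (Wψ p) (Jc (Wρ p)) : ℝ) = -(inner ℝ (Wρ p) (Jc (Wψ p)) : ℝ) := by
      rw [hJanti, real_inner_comm]
    simp only [hcrdef, hdPdef, hdQdef]
    rw [h1]
    ring
  have hQper : ∀ ρ, Q (ρ, 2 * π) = Q (ρ, 0) := by
    intro ρ
    have h1 : (2 * π : ℝ) = 0 + 2 * π := by ring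
    simp only [hQdef]
    rw [h1, hper, hWρper]
  have hgcdP : ∀ ρ, gc ρ = (1/2) * ∫ ψ in (0:ℝ)..(2 * π), dP (ρ, ψ) := by
    intro ρ
    have hint : (∫ ψ in (0:ℝ)..(2 * π), dQ (ρ, ψ)) = Q (ρ, 2 * π) - Q (ρ, 0) :=
      intervalIntegral.integral_eq_sub_of_hasDerivAt (fun ψ _ => hdQ ρ ψ) (hIψ _ hdQc ρ)
    rw [hQper, sub_self] at hint
    calc gc ρ = ∫ ψ in (0:ℝ)..(2 * π), ((1/2) * dP (ρ, ψ) - (1/2) * dQ (ρ, ψ)) :=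
        intervalIntegral.integral_congr fun ψ _ => by rw [hcr2 (ρ, ψ)]; ring
      _ = (∫ ψ in (0:ℝ)..(2 * π), (1/2) * dP (ρ, ψ))
            - ∫ ψ in (0:ℝ)..(2 * π), (1/2) * dQ (ρ, ψ) :=
        intervalIntegral.integral_sub ((hIψ _ hdPc ρ).const_mul _) ((hIψ _ hdQc ρ).const_mul _)
      _ = (1/2) * ∫ ψ in (0:ℝ)..(2 * π), dP (ρ, ψ) := by
        rw [intervalIntegral.integral_const_mul, intervalIntegral.integral_const_mul, hint]
        ring
  have hPzero : ∀ ψ : ℝ, (∫ ρ in (-R)..R, dP (ρ, ψ)) = 0 := by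
    intro ψ
    have h1 : (∫ ρ in (-R)..R, dP (ρ, ψ)) = P (R, ψ) - P (-R, ψ) :=
      intervalIntegral.integral_eq_sub_of_hasDerivAt (fun ρ _ => hdP ρ ψ)
        ((hdPc.comp (continuous_id.prodMk continuous_const)).intervalIntegrable _ _)
    have hWr : W (R, ψ) = 0 := hK R ψ (by rwa [abs_of_pos hRpos])
    have hWl : W (-R, ψ) = 0 := hK (-R) ψ (by rwa [abs_neg, abs_of_pos hRpos])
    rw [h1]
    simp only [hPdef]
    rw [hWr, hWl, inner_zero_left, inner_zero_left, sub_self]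
  have hswap : (∫ ρ in (-R)..R, ∫ ψ in (0:ℝ)..(2 * π), dP (ρ, ψ))
      = ∫ ψ in (0:ℝ)..(2 * π), ∫ ρ in (-R)..R, dP (ρ, ψ) := by
    have hle1 : (-R : ℝ) ≤ R := by linarith
    have hle2 : (0:ℝ) ≤ 2 * π := le_of_lt h2π
    have hInt : Integrable (Function.uncurry fun ρ ψ => dP (ρ, ψ))
        ((volume.restrict (Ioc (-R) R)).prod (volume.restrict (Ioc (0:ℝ) (2 * π)))) := by
      rw [Measure.prod_restrict, ← Measure.volume_eq_prod]
      have hint : IntegrableOn (fun z : ℝ × ℝ => dP z) (Icc (-R) R ×ˢ Icc (0:ℝ) (2 * π)) volume :=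
        hdPc.continuousOn.integrableOn_compact (isCompact_Icc.prod isCompact_Icc)
      exact hint.mono_set (Set.prod_mono Ioc_subset_Icc_self Ioc_subset_Icc_self)
    rw [intervalIntegral.integral_of_le hle1, intervalIntegral.integral_of_le hle2]
    simp_rw [intervalIntegral.integral_of_le hle2, intervalIntegral.integral_of_le hle1]
    exact MeasureTheory.integral_integral_swap hInt
  have hcrossI : (∫ ρ in (-R)..R, gc ρ) = 0 := by
    calc (∫ ρ in (-R)..R, gc ρ)
        = ∫ ρ in (-R)..R, (1/2) * ∫ ψ in (0:ℝ)..(2 * π), dP (ρ, ψ) :=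
          intervalIntegral.integral_congr fun ρ _ => hgcdP ρ
      _ = (1/2) * ∫ ρ in (-R)..R, ∫ ψ in (0:ℝ)..(2 * π), dP (ρ, ψ) :=
          intervalIntegral.integral_const_mul _ _
      _ = (1/2) * ∫ ψ in (0:ℝ)..(2 * π), ∫ ρ in (-R)..R, dP (ρ, ψ) := by rw [hswap]
      _ = 0 := by
          rw [intervalIntegral.integral_congr (g := fun _ => (0:ℝ)) fun ψ _ => hPzero ψ]
          simp
  -- outer integrals
  have hle1 : (-R : ℝ) ≤ R := by linarith
  have hEI : (∫ ρ in (-R)..R, gA ρ)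
      = (∫ ρ in (-R)..R, g1 ρ) + (∫ ρ in (-R)..R, g2 ρ) + 2 * ∫ ρ in (-R)..R, gc ρ := by
    calc (∫ ρ in (-R)..R, gA ρ)
        = ∫ ρ in (-R)..R, (g1 ρ + g2 ρ + 2 * gc ρ) :=
          intervalIntegral.integral_congr fun ρ _ => hsplit ρ
      _ = (∫ ρ in (-R)..R, (g1 ρ + g2 ρ)) + ∫ ρ in (-R)..R, 2 * gc ρ :=
          intervalIntegral.integral_add ((hg1c.intervalIntegrable (μ := volume) _ _).add
            (hg2c.intervalIntegrable (μ := volume) _ _)) ((hgcc.intervalIntegrable (μ := volume) _ _).const_mul 2)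
      _ = _ := by
          rw [intervalIntegral.integral_add (hg1c.intervalIntegrable (μ := volume) _ _)
            (hg2c.intervalIntegrable (μ := volume) _ _), intervalIntegral.integral_const_mul]
  have hEbound : (∫ ρ in (-R)..R, gA ρ) ≤ C ^ 2 * ∫ ρ in (-R)..R, g0 ρ := by
    have h := intervalIntegral.integral_mono_on hle1 (hgAc.intervalIntegrable (μ := volume) _ _)
      ((hg0c.intervalIntegrable (μ := volume) _ _).const_mul (C ^ 2)) (fun ρ _ => hbd ρ)
    rwa [intervalIntegral.integral_const_mul] at h
  have hgapI : 4 * (∫ ρ in (-R)..R, g0 ρ) ≤ ∫ ρ in (-R)..R, g2 ρ := by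
    have h := intervalIntegral.integral_mono_on hle1
      ((hg0c.intervalIntegrable (μ := volume) _ _).const_mul 4) (hg2c.intervalIntegrable (μ := volume) _ _)
      (fun ρ _ => hgap ρ)
    rwa [intervalIntegral.integral_const_mul] at h
  have hI1nn : 0 ≤ ∫ ρ in (-R)..R, g1 ρ :=
    intervalIntegral.integral_nonneg hle1 fun ρ _ => hg1nn ρ
  have hI0nn : 0 ≤ ∫ ρ in (-R)..R, g0 ρ :=
    intervalIntegral.integral_nonneg hle1 fun ρ _ => hg0nn ρ
  have hC4 : C ^ 2 < 4 := by
    have hCw0 : (0:ℝ) ≤ Cw := le_trans (abs_nonneg _) (hCw 0)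
    nlinarith
  have hI0 : (∫ ρ in (-R)..R, g0 ρ) = 0 := by
    have h1 : 4 * (∫ ρ in (-R)..R, g0 ρ) ≤ C ^ 2 * ∫ ρ in (-R)..R, g0 ρ := by
      calc 4 * (∫ ρ in (-R)..R, g0 ρ) ≤ ∫ ρ in (-R)..R, g2 ρ := hgapI
        _ ≤ ∫ ρ in (-R)..R, gA ρ := by rw [hEI, hcrossI]; linarith
        _ ≤ C ^ 2 * ∫ ρ in (-R)..R, g0 ρ := hEbound
    nlinarith
  -- conclude
  have hg0zero : ∀ ρ ∈ Icc (-R) R, g0 ρ = 0 :=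
    aux_zero_of_integral_zero hg0c hg0nn (by linarith) hI0
  have hWzero : ∀ ρ ∈ Icc (-R) R, ∀ ψ ∈ Icc (0:ℝ) (2 * π), W (ρ, ψ) = 0 := by
    intro ρ hρmem ψ hψmem
    have h1 : ∀ x ∈ Icc (0:ℝ) (2 * π), e0 (ρ, x) = 0 :=
      aux_zero_of_integral_zero
        (show Continuous fun x : ℝ => e0 (ρ, x) from he0c.comp (Continuous.prodMk_right ρ))
        (fun x => by simp only [he0def]; positivity) h2π (hg0zero ρ hρmem)
    have h2 := h1 ψ hψmem
    simp only [he0def] at h2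
    have h3 : ‖W (ρ, ψ)‖ = 0 := by
      have := sq_eq_zero_iff.1 h2
      exact this
    exact norm_eq_zero.1 h3
  intro ρ ψ
  by_cases hcase : K < |ρ|
  · exact hK ρ ψ hcase
  · push_neg at hcase
    have hρmem : ρ ∈ Icc (-R) R := by
      have : |ρ| ≤ R := le_trans hcase (le_of_lt hKR)
      exact abs_le.1 this
    have hp : Function.Periodic (fun t => W (ρ, t)) (2 * π) := fun t => hper ρ t
    obtain ⟨y, hy, hWy⟩ := hp.exists_mem_Ico₀ h2π ψ
    rw [hWy]
    exact hWzero ρ hρmem y ⟨hy.1, le_of_lt hy.2⟩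
end
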